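/- arXiv:2212.01720 — 6 statements merged into one kernel-verified Lean document; each statement's English description precedes it below -/
import Mathlib

section
/- Let w be a vector-valued polynomial of the form w(x) = τ(x)·x where τ ∈ P_{k-2}(T; 𝕂) is an antisymmetric-matrix-valued polynomial. If (skw∇w)(x)·x = 0 for all x, then w ≡ 0. -/
/-!
Since `τ` is antisymmetric, `w · x = xᵀ τ x` vanishes identically. The identity
`2 (skw ∇w) x = ∇(w · x) - (I + x · ∇) w` then turns the hypothesis into `(I + x · ∇) w = 0`.
The Euler operator `x · ∇` multiplies the coefficient of `x ^ m` by the degree `|m|`, so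
`I + x · ∇` multiplies it by `1 + |m| ≠ 0` and is injective.
-/

open MvPolynomial

open Matrix in
theorem Matrix.dotProduct_mulVec_self_eq_zero {n R : Type*} [Fintype n] [CommRing R]
    [IsAddTorsionFree R] {A : Matrix n n R} (hA : Aᵀ = -A) (x : n → R) :
    x ⬝ᵥ A *ᵥ x = 0 := by
  rw [← self_eq_neg]
  calc x ⬝ᵥ A *ᵥ x = x ⬝ᵥ Aᵀ *ᵥ x := by
        rw [dotProduct_mulVec, dotProduct_comm, ← mulVec_transpose]
    _ = -(x ⬝ᵥ A *ᵥ x) := by rw [hA, neg_mulVec, dotProduct_neg]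

namespace MvPolynomial

variable {σ R : Type*} [Fintype σ]

theorem coeff_sum_X_mul_pderiv [CommSemiring R] (m : σ →₀ ℕ) (p : MvPolynomial σ R) :
    coeff m (∑ i, X i * pderiv i p) = m.degree • coeff m p := by
  induction p using MvPolynomial.induction_on' with
  | monomial n a =>
    classical
    simp only [X_mul_pderiv_monomial, ← Finset.sum_smul, ← Finsupp.degree_eq_sum, coeff_smul,
      coeff_monomial]
    split_ifs with h
    · rw [h]
    · simp only [smul_zero]
  | add p q hp hq => simp only [map_add, mul_add, Finset.sum_add_distrib, coeff_add, hp, hq,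
      smul_add]

theorem eq_zero_of_add_sum_X_mul_pderiv_eq_zero [CommRing R] [IsAddTorsionFree R]
    {p : MvPolynomial σ R} (h : p + ∑ i, X i * pderiv i p = 0) : p = 0 := by
  ext m
  have hm : (m.degree + 1) • coeff m p = (m.degree + 1) • 0 := by
    rw [smul_zero, add_smul, one_smul, add_comm, ← coeff_sum_X_mul_pderiv, ← coeff_add, h,
      coeff_zero]
  exact nsmul_right_injective m.degree.succ_ne_zero hm

theorem pderiv_sum_mul_X [CommSemiring R] (w : σ → MvPolynomial σ R) (j : σ) :
    pderiv j (∑ i, w i * X i) = ∑ i, pderiv j (w i) * X i + w j := by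
  classical
  simp only [map_sum, Derivation.leibniz, pderiv_X, Pi.single_apply, smul_eq_mul, mul_ite,
    mul_one, mul_zero, Finset.sum_add_distrib, Finset.sum_ite_eq', Finset.mem_univ, if_true]
  rw [add_comm]
  simp only [mul_comm (X _)]

/-- The coordinate form of `2 (skw ∇w) x = ∇(w · x) - (I + x · ∇) w`. -/
theorem sum_sub_pderiv_mul_X [CommRing R] (w : σ → MvPolynomial σ R) (j : σ) :
    ∑ i, (pderiv j (w i) - pderiv i (w j)) * X i =
      pderiv j (∑ i, w i * X i) - (w j + ∑ i, X i * pderiv i (w j)) := by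
  simp only [pderiv_sum_mul_X, sub_mul, Finset.sum_sub_distrib, mul_comm (X _)]
  ring

end MvPolynomial

theorem skw_grad_vanish_of_antisym_times_x_general (d : ℕ)
    (τ : Matrix (Fin d) (Fin d) (MvPolynomial (Fin d) ℝ))
    (hτskw : ∀ i j, τ j i = - τ i j)
    (w : Fin d → MvPolynomial (Fin d) ℝ)
    (hw : ∀ j, w j = ∑ i : Fin d, τ j i * X i)
    (hskw : ∀ j, ∑ i : Fin d, C (1/2 : ℝ) * (pderiv j (w i) - pderiv i (w j)) * X i = 0) :
    ∀ j, w j = 0 := by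
  have hwx : ∑ i, w i * X i = 0 := by
    have hτ : τ.transpose = -τ := Matrix.ext fun i j => hτskw i j
    have hw' : w = τ.mulVec (X ·) := funext hw
    rw [hw', ← dotProduct, dotProduct_comm]
    exact Matrix.dotProduct_mulVec_self_eq_zero hτ _
  intro j
  refine eq_zero_of_add_sum_X_mul_pderiv_eq_zero ?_
  have hcurl : ∑ i, (pderiv j (w i) - pderiv i (w j)) * X i = 0 := by
    simpa only [mul_assoc, ← Finset.mul_sum, mul_eq_zero, C_eq_zero, one_div, inv_eq_zero,
      two_ne_zero, false_or] using hskw j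
  rwa [sum_sub_pderiv_mul_X, hwx, map_zero, zero_sub, neg_eq_zero] at hcurl

/-- Let `w(x) = τ(x)·x` where `τ ∈ P_{k-2}(T; 𝕂)` is an
antisymmetric-matrix-valued polynomial. If `(skw∇w)(x)·x = 0` (as a polynomial
identity), then `w ≡ 0`. Here `(∇w)_{ij} = ∂_i w_j` and `skw A = (A - Aᵀ)/2`,
so that `((skw∇w)x)_j = Σ_i (1/2)(∂_j w_i − ∂_i w_j) x_i`. -/
theorem skw_grad_vanish_of_antisym_times_x (d k : ℕ)
    (τ : Matrix (Fin d) (Fin d) (MvPolynomial (Fin d) ℝ))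
    (hτdeg : ∀ i j, (τ i j).totalDegree ≤ k - 2)
    (hτskw : ∀ i j, τ j i = - τ i j)
    (w : Fin d → MvPolynomial (Fin d) ℝ)
    (hw : ∀ j, w j = ∑ i : Fin d, τ j i * X i)
    (hskw : ∀ j, ∑ i : Fin d, C (1/2 : ℝ) * (pderiv j (w i) - pderiv i (w j)) * X i = 0) :
    ∀ j, w j = 0 :=
  skw_grad_vanish_of_antisym_times_x_general d τ hτskw w hw hskw
end

section
/- The polynomial complex ℝ → P_k(T) →(∇) P_{k-1}(T; ℝ^d) →(skw∇) P_{k-2}(T; 𝕂) is exact at P_{k-1}(T; ℝ^d): a vector polynomial v ∈ P_{k-1}(T; ℝ^d) satisfies skw∇v = 0 if and only if v = ∇q for some q ∈ P_k(T). -/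
/-!
Converse direction: partial derivatives commute. Direct direction: the radial homotopy
`v ↦ ∑ i, X i * v i`. If the `v i` are homogeneous of degree `n` with symmetric Jacobian, then
`∂_j (∑ i, X i * v i) = v j + ∑ i, X i * ∂_i (v j) = (n + 1) • v j` by Euler's identity, so a
potential of `v` is obtained by applying this homotopy to each homogeneous component of `v`
and dividing by `n + 1`, which raises the degree by one.
-/

open Finset

namespace MvPolynomial

variable {σ : Type*}

theorem pderiv_pderiv_comm {R : Type*} [CommRing R] (i j : σ) (p : MvPolynomial σ R) :
    pderiv i (pderiv j p) = pderiv j (pderiv i p) := by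
  have hcomm : ⁅pderiv i, pderiv j⁆ = (0 : Derivation R (MvPolynomial σ R) (MvPolynomial σ R)) :=
    derivation_ext fun k => by
      classical
      rw [Derivation.commutator_apply, pderiv_X, pderiv_X]
      simp [Pi.single_apply, apply_ite (pderiv _)]
  rw [← sub_eq_zero, ← Derivation.commutator_apply, hcomm, Derivation.zero_apply]

variable {R : Type*} [CommSemiring R]

theorem pderiv_homogeneousComponent_succ (i : σ) (n : ℕ) (p : MvPolynomial σ R) :
    pderiv i (homogeneousComponent (n + 1) p) = homogeneousComponent n (pderiv i p) := by
  ext β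
  simp only [coeff_pderiv, coeff_homogeneousComponent, map_add, Finsupp.degree_single,
    add_left_inj]
  split_ifs <;> simp

theorem pderiv_homogeneousComponent_symm {v : σ → MvPolynomial σ R}
    (hsymm : ∀ i j, pderiv i (v j) = pderiv j (v i)) (n : ℕ) (i j : σ) :
    pderiv i (homogeneousComponent n (v j)) = pderiv j (homogeneousComponent n (v i)) := by
  cases n with
  | zero => simp
  | succ n => rw [pderiv_homogeneousComponent_succ, pderiv_homogeneousComponent_succ, hsymm]

theorem sum_homogeneousComponent_of_totalDegree_le {p : MvPolynomial σ R} {m : ℕ}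
    (hp : p.totalDegree ≤ m) : ∑ n ∈ range (m + 1), homogeneousComponent n p = p := by
  rw [← sum_subset (range_subset_range.2 (by omega : p.totalDegree + 1 ≤ m + 1)),
    sum_homogeneousComponent]
  intro n _ hn
  exact homogeneousComponent_eq_zero _ _ (by simpa using hn)

variable [Fintype σ]

theorem pderiv_sum_X_mul_of_isHomogeneous {n : ℕ} {v : σ → MvPolynomial σ R}
    (hv : ∀ i, (v i).IsHomogeneous n) (hsymm : ∀ i j, pderiv i (v j) = pderiv j (v i))
    (j : σ) : pderiv j (∑ i, X i * v i) = (n + 1) • v j := by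
  classical
  calc pderiv j (∑ i, X i * v i) = ∑ i, (pderiv j (X i) * v i + X i * pderiv i (v j)) := by
        simp only [map_sum, pderiv_mul, hsymm j]
    _ = v j + n • v j := by
        rw [sum_add_distrib, (hv j).sum_X_mul_pderiv]
        simp [pderiv_X, Pi.single_apply]
    _ = (n + 1) • v j := by rw [succ_nsmul']

theorem exists_totalDegree_le_pderiv_eq_of_pderiv_symm {K : Type*} [Field K] [CharZero K]
    {m : ℕ} (v : σ → MvPolynomial σ K) (hv : ∀ j, (v j).totalDegree ≤ m)
    (hsymm : ∀ i j, pderiv i (v j) = pderiv j (v i)) :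
    ∃ q : MvPolynomial σ K, q.totalDegree ≤ m + 1 ∧ ∀ j, pderiv j q = v j := by
  set w : ℕ → MvPolynomial σ K := fun n => ∑ i, X i * homogeneousComponent n (v i)
  have hw (n : ℕ) : (w n).IsHomogeneous (n + 1) :=
    IsHomogeneous.sum _ _ _ fun i _ => by
      simpa [add_comm] using (isHomogeneous_X K i).mul (homogeneousComponent_isHomogeneous n _)
  refine ⟨∑ n ∈ range (m + 1), (n + 1 : K)⁻¹ • w n, ?_, fun j => ?_⟩
  · apply totalDegree_finsetSum_le
    intro n hn
    exact (totalDegree_smul_le _ _).trans <| (hw n).totalDegree_le.trans (by simp at hn; omega)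
  · calc pderiv j (∑ n ∈ range (m + 1), (n + 1 : K)⁻¹ • w n)
          = ∑ n ∈ range (m + 1), homogeneousComponent n (v j) := by
          rw [map_sum]
          refine sum_congr rfl fun n _ => ?_
          rw [Derivation.map_smul, pderiv_sum_X_mul_of_isHomogeneous
            (fun i => homogeneousComponent_isHomogeneous n (v i))
            (pderiv_homogeneousComponent_symm hsymm n), ← Nat.cast_smul_eq_nsmul K,
            Nat.cast_add_one]
          exact inv_smul_smul₀ n.cast_add_one_ne_zero _
      _ = v j := sum_homogeneousComponent_of_totalDegree_le (hv j)

end MvPolynomial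

open MvPolynomial

/-- Exactness of the polynomial complex
`ℝ → P_k(T) →(∇) P_{k-1}(T; ℝ^d) →(skw∇) P_{k-2}(T; 𝕂)` at `P_{k-1}(T; ℝ^d)`:
a vector polynomial `v ∈ P_{k-1}(T; ℝ^d)` satisfies `skw∇v = 0`
(i.e. `∂_i v_j = ∂_j v_i` for all `i, j`) if and only if `v = ∇q` for some
`q ∈ P_k(T)`. -/
theorem polynomial_complex_exact_at_vectors (d k : ℕ) (hk : 1 ≤ k)
    (v : Fin d → MvPolynomial (Fin d) ℝ)
    (hv : ∀ j, (v j).totalDegree ≤ k - 1) :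
    (∀ i j, pderiv i (v j) = pderiv j (v i)) ↔
      ∃ q : MvPolynomial (Fin d) ℝ, q.totalDegree ≤ k ∧ ∀ j, v j = pderiv j q := by
  constructor
  · intro hsymm
    obtain ⟨q, hq, hvq⟩ := exists_totalDegree_le_pderiv_eq_of_pderiv_symm v hv hsymm
    exact ⟨q, by omega, fun j => (hvq j).symm⟩
  · rintro ⟨q, -, hvq⟩ i j
    rw [hvq i, hvq j, pderiv_pderiv_comm]
end

section
/- dim(P_{k-2}(T; 𝕂) ∩ ker(x)) = dim P_{k-2}(T; 𝕂) + dim ∇P_k(T) − dim P_{k-1}(T; ℝ^d), where the dimensions are over a d-dimensional simplex; explicitly, dim ∇P_k(T) = C(k+d, d) − 1, dim P_{k-1}(T; ℝ^d) = d·C(k-1+d, d), dim P_{k-2}(T; 𝕂) = (d(d−1)/2)·C(k-2+d, d). -/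
/-!
The spaces form the polynomial Koszul complex
`0 → P_{k-2}(𝕂) ∩ ker x → P_{k-2}(𝕂) → P_{k-1}(ℝ^d) → P_k → ℝ → 0`, with maps `τ ↦ τx`,
`v ↦ v·x` and `p ↦ p(0)`, which is exact. The composites vanish because `τ` is antisymmetric and
`x` has no constant term; exactness comes from a contracting homotopy built from the partial
derivatives and the inverse of `E + c`, where the Euler operator `E = ∑ xᵢ ∂ᵢ` multiplies a
monomial of degree `n` by `n`. Rank–nullity along the complex, with `dim P_m = C(m + d, d)` and
`dim 𝕂 = C(d, 2)`, gives the formula.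
-/

open MvPolynomial

/-- The space `P_m(T; 𝕂) ∩ ker(x)`: antisymmetric-matrix-valued polynomials of
total degree at most `m` in `d` variables with `τ(x)x = 0`. -/
noncomputable def antisymKerX (d m : ℕ) :
    Submodule ℝ (Matrix (Fin d) (Fin d) (MvPolynomial (Fin d) ℝ)) where
  carrier := {τ | (∀ i j, (τ i j).totalDegree ≤ m) ∧ (∀ i j, τ j i = - τ i j) ∧
    ∀ j, ∑ i : Fin d, τ j i * X i = 0}
  zero_mem' := by
    refine ⟨fun i j => by simp, fun i j => by simp, fun j => by simp⟩
  add_mem' := by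
    rintro a b ⟨ha1, ha2, ha3⟩ ⟨hb1, hb2, hb3⟩
    refine ⟨fun i j => ?_, fun i j => ?_, fun j => ?_⟩
    · exact le_trans (totalDegree_add _ _) (max_le (ha1 i j) (hb1 i j))
    · simp only [Matrix.add_apply, ha2 i j, hb2 i j]; ring
    · simp only [Matrix.add_apply, add_mul]
      rw [Finset.sum_add_distrib, ha3 j, hb3 j, add_zero]
  smul_mem' := by
    rintro c a ⟨ha1, ha2, ha3⟩
    refine ⟨fun i j => ?_, fun i j => ?_, fun j => ?_⟩
    · exact le_trans (totalDegree_smul_le c (a i j)) (ha1 i j)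
    · simp only [Matrix.smul_apply, ha2 i j, smul_neg]
    · simp only [Matrix.smul_apply, smul_mul_assoc]
      rw [← Finset.smul_sum, ha3 j, smul_zero]

open Module Matrix

theorem Fintype.card_subtype_fst_lt_snd (ι : Type*) [Fintype ι] [LinearOrder ι] :
    card {p : ι × ι // p.1 < p.2} = (card ι).choose 2 := by
  let e := (orderIsoFinOfCardEq ι rfl).symm
  let sigmaEquiv : {p : Fin (card ι) × Fin (card ι) // p.1 < p.2} ≃ Σ j : Fin (card ι), Fin j :=
    { toFun := fun p => ⟨p.1.2, p.1.1, p.2⟩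
      invFun := fun x => ⟨(⟨x.2, x.2.2.trans x.1.2⟩, x.1), x.2.2⟩ }
  rw [card_congr ((e.toEquiv.prodCongr e.toEquiv).subtypeEquiv (p := fun p => p.1 < p.2)
      (q := fun p => p.1 < p.2) fun p => e.lt_iff_lt.symm),
    card_congr sigmaEquiv, card_sigma]
  simp only [card_fin]
  rw [Fin.sum_univ_eq_sum_range (fun i => i), Finset.sum_range_id, Nat.choose_two_right]

theorem Finsupp.degree_sub_single_one_add_one {σ : Type*} {s : σ →₀ ℕ} {i : σ} (hi : s i ≠ 0) :
    (s - single i 1).degree + 1 = s.degree := by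
  conv_rhs => rw [← sub_add_single_one_cancel hi]
  rw [map_add, degree_single]

theorem Matrix.mulVec_dotProduct_self_eq_zero {ι S : Type*} [Fintype ι] [CommRing S]
    [IsAddTorsionFree S] {τ : Matrix ι ι S} (hτ : ∀ i j, τ j i = -τ i j) (x : ι → S) :
    τ *ᵥ x ⬝ᵥ x = 0 := by
  have hT : τᵀ = -τ := Matrix.ext hτ
  refine self_eq_neg.mp ?_
  calc τ *ᵥ x ⬝ᵥ x = x ᵥ* τ ⬝ᵥ x := by rw [dotProduct_comm, dotProduct_mulVec]
    _ = -(τ *ᵥ x ⬝ᵥ x) := by rw [← mulVec_transpose, hT, neg_mulVec, neg_dotProduct]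

namespace Submodule

section FinrankMap

variable {K V W : Type*} [DivisionRing K] [AddCommGroup V] [Module K V] [AddCommGroup W]
  [Module K W]

theorem finrank_map_add_finrank_inf_ker (S : Submodule K V) [FiniteDimensional K S]
    (f : V →ₗ[K] W) :
    finrank K (S.map f) + finrank K ↥(S ⊓ LinearMap.ker f) = finrank K S := by
  rw [← f.range_domRestrict S, ← LinearMap.finrank_range_add_finrank_ker (f.domRestrict S),
    LinearMap.ker_domRestrict, ← finrank_map_subtype_eq, map_comap_subtype]

theorem pi_univ_const_eq_range_compLeft (ι : Type*) (N : Submodule K V) :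
    pi Set.univ (fun _ : ι => N) = LinearMap.range (N.subtype.compLeft ι) := by
  rw [LinearMap.range_compLeft, range_subtype]

theorem finiteDimensional_pi_univ_const {ι : Type*} [Finite ι] (N : Submodule K V)
    [FiniteDimensional K N] :
    FiniteDimensional K (pi Set.univ fun _ : ι => N) := by
  rw [pi_univ_const_eq_range_compLeft]
  infer_instance

theorem finrank_pi_univ_const {ι : Type*} [Fintype ι] (N : Submodule K V)
    [FiniteDimensional K N] :
    finrank K (pi Set.univ fun _ : ι => N) = Fintype.card ι * finrank K N := by
  rw [pi_univ_const_eq_range_compLeft,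
    LinearMap.finrank_range_of_inj Subtype.val_injective.comp_left, finrank_pi_fintype,
    Finset.sum_const, Finset.card_univ, smul_eq_mul]

end FinrankMap

section SkewMatrices

variable {R M : Type*} [Ring R] [AddCommGroup M] [Module R M]

def skewMatrices (ι : Type*) (N : Submodule R M) : Submodule R (Matrix ι ι M) where
  carrier := {τ | (∀ i j, τ i j ∈ N) ∧ ∀ i j, τ j i = -τ i j}
  zero_mem' := ⟨fun _ _ => N.zero_mem, fun _ _ => neg_zero.symm⟩
  add_mem' := fun ⟨ha, ha'⟩ ⟨hb, hb'⟩ =>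
    ⟨fun i j => N.add_mem (ha i j) (hb i j), fun i j => by simp [ha' i j, hb' i j, add_comm]⟩
  smul_mem' := fun c _ ⟨ha, ha'⟩ =>
    ⟨fun i j => N.smul_mem c (ha i j), fun i j => by simp [ha' i j]⟩

variable {ι : Type*}

theorem mem_skewMatrices {N : Submodule R M} {τ : Matrix ι ι M} :
    τ ∈ N.skewMatrices ι ↔ (∀ i j, τ i j ∈ N) ∧ ∀ i j, τ j i = -τ i j := Iff.rfl

variable [LinearOrder ι] [IsAddTorsionFree M]

def skewMatricesEquivUpper (N : Submodule R M) :
    N.skewMatrices ι ≃ₗ[R] ({p : ι × ι // p.1 < p.2} → N) where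
  toFun τ p := ⟨τ.1 p.1.1 p.1.2, τ.2.1 _ _⟩
  map_add' _ _ := rfl
  map_smul' _ _ := rfl
  invFun f := ⟨fun i j =>
    if h : i < j then f ⟨(i, j), h⟩ else if h : j < i then -f ⟨(j, i), h⟩ else 0, by
    refine ⟨fun i j => ?_, fun i j => ?_⟩
    · dsimp only
      split_ifs
      exacts [(f _).2, N.neg_mem (f _).2, N.zero_mem]
    · dsimp only
      rcases lt_trichotomy i j with h | rfl | h
      · simp [h, h.not_gt]
      · simp
      · simp [h, h.not_gt]⟩
  left_inv τ := by
    ext i j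
    rcases lt_trichotomy i j with h | rfl | h
    · simp [h]
    · simpa using (self_eq_neg.mp (τ.2.2 i i)).symm
    · simp [h, h.not_gt, ← τ.2.2 j i]
  right_inv f := funext fun p => by simp [p.2]

instance [Finite ι] (N : Submodule R M) [Module.Finite R N] :
    Module.Finite R (N.skewMatrices ι) :=
  have := Fintype.ofFinite ι
  Module.Finite.equiv (skewMatricesEquivUpper N).symm

end SkewMatrices

theorem finrank_skewMatrices {K M : Type*} [Field K] [AddCommGroup M] [Module K M]
    [IsAddTorsionFree M] (ι : Type*) [Fintype ι] [LinearOrder ι] (N : Submodule K M)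
    [FiniteDimensional K N] :
    finrank K (N.skewMatrices ι) = (Fintype.card ι).choose 2 * finrank K N := by
  rw [(skewMatricesEquivUpper N).finrank_eq, finrank_pi_fintype, Finset.sum_const,
    Finset.card_univ, Fintype.card_subtype_fst_lt_snd, smul_eq_mul]

end Submodule

namespace MvPolynomial

section Degree

variable {σ R : Type*} [CommSemiring R] {m : ℕ} {p : MvPolynomial σ R}

theorem mem_restrictTotalDegree_iff_coeff :
    p ∈ restrictTotalDegree σ R m ↔ ∀ s : σ →₀ ℕ, m < s.degree → coeff s p = 0 := by
  rw [mem_restrictTotalDegree, totalDegree, Finset.sup_le_iff]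
  refine forall_congr' fun s => ?_
  rw [mem_support_iff, ← not_imp_not, not_not, not_le]
  rfl

theorem pderiv_mem_restrictTotalDegree (i : σ) (hp : p ∈ restrictTotalDegree σ R (m + 1)) :
    pderiv i p ∈ restrictTotalDegree σ R m := by
  rw [mem_restrictTotalDegree_iff_coeff] at hp ⊢
  intro s hs
  rw [coeff_pderiv, hp _ (by simpa using hs), zero_mul]

theorem mul_X_mem_restrictTotalDegree (i : σ) (hp : p ∈ restrictTotalDegree σ R m) :
    p * X i ∈ restrictTotalDegree σ R (m + 1) := by
  classical
  rw [mem_restrictTotalDegree_iff_coeff] at hp ⊢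
  intro s hs
  rw [coeff_mul_X']
  split_ifs with hi
  · have := Finsupp.degree_sub_single_one_add_one (Finsupp.mem_support_iff.mp hi)
    exact hp _ (by omega)
  · rfl

theorem map_lcoeff_zero_restrictTotalDegree (m : ℕ) :
    (restrictTotalDegree σ R m).map (lcoeff R 0) = ⊤ :=
  Submodule.eq_top_iff'.mpr fun a =>
    ⟨C a, (mem_restrictTotalDegree _ _ _).mpr (by simp), by simp⟩

end Degree

/-- Monomials `s` of degree at most `m` correspond to monomials of degree exactly `m` in one
extra variable, i.e. to `Sym (Option σ) m`. -/
theorem card_setOf_degree_le (σ : Type*) [Fintype σ] (m : ℕ) :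
    Nat.card {s : σ →₀ ℕ | s.degree ≤ m} = (m + Fintype.card σ).choose (Fintype.card σ) := by
  classical
  have sum_eq (P : Option σ →₀ ℕ) : P.sum (fun _ ↦ id) = P none + P.some.degree :=
    P.sum_option_index _ (fun _ => rfl) fun _ _ _ => rfl
  let homogenize : {s : σ →₀ ℕ | s.degree ≤ m} ≃ {P : Option σ →₀ ℕ // P.sum (fun _ ↦ id) = m} :=
    { toFun := fun s => ⟨s.1.optionElim (m - s.1.degree), by
        rw [sum_eq, Finsupp.optionElim_apply_none, Finsupp.some_optionElim]
        exact Nat.sub_add_cancel s.2⟩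
      invFun := fun P => ⟨P.1.some, by
        have := sum_eq P.1
        show P.1.some.degree ≤ m
        omega⟩
      left_inv := fun s => by simp
      right_inv := fun ⟨P, hP⟩ => by
        ext1
        dsimp only
        rw [← hP, sum_eq, Nat.add_sub_cancel, Finsupp.optionElim_some] }
  rw [Nat.card_congr (homogenize.trans (Sym.equivNatSum (Option σ) m).symm),
    Nat.card_eq_fintype_card, Sym.card_sym_eq_choose, Fintype.card_option, add_right_comm,
    Nat.add_sub_cancel, add_comm, Nat.choose_symm_add]

theorem finrank_restrictTotalDegree (σ R : Type*) [Fintype σ] [CommRing R] [Nontrivial R]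
    (m : ℕ) :
    finrank R (restrictTotalDegree σ R m) = (m + Fintype.card σ).choose (Fintype.card σ) :=
  (finrank_eq_nat_card_basis (basisRestrictSupport R _)).trans (card_setOf_degree_le σ m)

section Euler

variable {σ R : Type*} [CommSemiring R] [Fintype σ]

noncomputable def euler : MvPolynomial σ R →ₗ[R] MvPolynomial σ R where
  toFun p := ∑ i, X i * pderiv i p
  map_add' p q := by simp only [map_add, mul_add, Finset.sum_add_distrib]
  map_smul' a p := by
    simp only [Derivation.map_smul, mul_smul_comm, Finset.smul_sum, RingHom.id_apply]

theorem euler_apply (p : MvPolynomial σ R) : euler p = ∑ i, X i * pderiv i p := rfl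

theorem euler_monomial (s : σ →₀ ℕ) (a : R) :
    euler (monomial s a) = s.degree • monomial s a := by
  simp only [euler_apply, X_mul_pderiv_monomial, ← Finset.sum_smul, Finsupp.degree_eq_sum]

end Euler

section EulerInv

variable {σ K : Type*} [Field K]

/-- The inverse of `euler + c`, dividing the monomial `s` by `s.degree + c`. For `c = 0` it kills
constants, since `0⁻¹ = 0`. -/
noncomputable def eulerInv (c : ℕ) : MvPolynomial σ K →ₗ[K] MvPolynomial σ K :=
  (basisMonomials σ K).constr K fun s => (s.degree + c : K)⁻¹ • monomial s 1

theorem eulerInv_monomial (c : ℕ) (s : σ →₀ ℕ) (a : K) :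
    eulerInv c (monomial s a) = (s.degree + c : K)⁻¹ • monomial s a := by
  have h := (basisMonomials σ K).constr_basis K
    (fun s => (s.degree + c : K)⁻¹ • monomial s (1 : K)) s
  rw [coe_basisMonomials] at h
  rw [← mul_one a, ← smul_eq_mul, ← smul_monomial, map_smul, eulerInv, h, smul_comm]

theorem coeff_eulerInv (c : ℕ) (p : MvPolynomial σ K) (s : σ →₀ ℕ) :
    coeff s (eulerInv c p) = (s.degree + c : K)⁻¹ * coeff s p := by
  classical
  induction p using MvPolynomial.induction_on' with
  | monomial t a =>
    rw [eulerInv_monomial, coeff_smul, coeff_monomial, smul_eq_mul]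
    split_ifs with h <;> simp [h]
  | add p q hp hq => rw [map_add, coeff_add, coeff_add, hp, hq, mul_add]

theorem eulerInv_mem_restrictTotalDegree (c : ℕ) {m : ℕ} {p : MvPolynomial σ K}
    (hp : p ∈ restrictTotalDegree σ K m) : eulerInv c p ∈ restrictTotalDegree σ K m := by
  rw [mem_restrictTotalDegree_iff_coeff] at hp ⊢
  intro s hs
  rw [coeff_eulerInv, hp s hs, mul_zero]

theorem pderiv_eulerInv (c : ℕ) (i : σ) (p : MvPolynomial σ K) :
    pderiv i (eulerInv c p) = eulerInv (c + 1) (pderiv i p) := by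
  induction p using MvPolynomial.induction_on' with
  | monomial s a =>
    rw [eulerInv_monomial, Derivation.map_smul, pderiv_monomial, eulerInv_monomial]
    rcases eq_or_ne (s i) 0 with hi | hi
    · simp [hi]
    · rw [← Finsupp.degree_sub_single_one_add_one hi]
      push_cast
      ring_nf
  | add p q hp hq => simp only [map_add, hp, hq]

theorem X_mul_eulerInv_succ (c : ℕ) (i : σ) (p : MvPolynomial σ K) :
    X i * eulerInv (c + 1) p = eulerInv c (X i * p) := by
  induction p using MvPolynomial.induction_on' with
  | monomial s a =>
    rw [eulerInv_monomial, mul_smul_comm, X, monomial_mul, one_mul, eulerInv_monomial, map_add,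
      Finsupp.degree_single]
    push_cast
    ring_nf
  | add p q hp hq => simp only [map_add, mul_add, hp, hq]

variable [CharZero K] [Fintype σ]

theorem eulerInv_euler_add_smul {c : ℕ} (hc : c ≠ 0) (p : MvPolynomial σ K) :
    eulerInv c (euler p + c • p) = p := by
  induction p using MvPolynomial.induction_on' with
  | monomial s a =>
    have hne : (s.degree + c : K) ≠ 0 := by exact_mod_cast (by omega : s.degree + c ≠ 0)
    rw [euler_monomial, ← add_smul, map_nsmul, eulerInv_monomial, smul_comm,
      ← Nat.cast_smul_eq_nsmul K, smul_smul]
    push_cast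
    rw [inv_mul_cancel₀ hne, one_smul]
  | add p q hp hq =>
    rw [map_add euler, smul_add, add_add_add_comm, map_add (eulerInv c), hp, hq]

theorem eulerInv_zero_euler (p : MvPolynomial σ K) :
    eulerInv 0 (euler p) = p - C (constantCoeff p) := by
  classical
  induction p using MvPolynomial.induction_on' with
  | monomial s a =>
    rw [euler_monomial, map_nsmul, eulerInv_monomial, constantCoeff_monomial]
    rcases eq_or_ne s 0 with rfl | hs
    · simp
    · have hne : (s.degree : K) ≠ 0 := by simpa [Finsupp.degree_eq_zero_iff] using hs
      rw [if_neg hs, C_0, sub_zero, smul_comm, ← Nat.cast_smul_eq_nsmul K, smul_smul,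
        Nat.cast_zero, add_zero, inv_mul_cancel₀ hne, one_smul]
  | add p q hp hq => rw [map_add, map_add, hp, hq, map_add, map_add]; ring

end EulerInv

section Koszul

variable {σ R : Type*} [Fintype σ] [CommRing R]

noncomputable def dotProductX : (σ → MvPolynomial σ R) →ₗ[R] MvPolynomial σ R :=
  (dotProductBilin R R).flip X

noncomputable def mulVecX : Matrix σ σ (MvPolynomial σ R) →ₗ[R] σ → MvPolynomial σ R :=
  (Matrix.mulVecBilin R R).flip X

@[simp]
theorem dotProductX_apply (v : σ → MvPolynomial σ R) : dotProductX v = v ⬝ᵥ X := rfl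

@[simp]
theorem mulVecX_apply (τ : Matrix σ σ (MvPolynomial σ R)) : mulVecX τ = τ *ᵥ X := rfl

theorem dotProduct_X_mem_restrictTotalDegree {m : ℕ} {v : σ → MvPolynomial σ R}
    (hv : ∀ i, v i ∈ restrictTotalDegree σ R m) : v ⬝ᵥ X ∈ restrictTotalDegree σ R (m + 1) :=
  Submodule.sum_mem _ fun i _ => mul_X_mem_restrictTotalDegree i (hv i)

theorem sum_X_mul_pderiv_of_dotProduct_X_eq_zero {v : σ → MvPolynomial σ R} (hv : v ⬝ᵥ X = 0)
    (j : σ) : ∑ i, X i * pderiv j (v i) = -v j := by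
  classical
  have h := congrArg (pderiv j) hv
  simp only [dotProduct, map_sum, pderiv_mul, pderiv_X, Finset.sum_add_distrib, map_zero] at h
  rw [eq_neg_iff_add_eq_zero, ← h]
  simp [Pi.single_apply, mul_comm]

end Koszul

section Exactness

variable {σ K : Type*} [Fintype σ] [Field K] [CharZero K] {m : ℕ}

theorem exists_dotProduct_X_eq {p : MvPolynomial σ K}
    (hp : p ∈ restrictTotalDegree σ K (m + 1)) (h0 : constantCoeff p = 0) :
    ∃ v : σ → MvPolynomial σ K, (∀ i, v i ∈ restrictTotalDegree σ K m) ∧ v ⬝ᵥ X = p := by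
  refine ⟨fun i => eulerInv 1 (pderiv i p),
    fun i => eulerInv_mem_restrictTotalDegree 1 (pderiv_mem_restrictTotalDegree i hp), ?_⟩
  calc (fun i => eulerInv 1 (pderiv i p)) ⬝ᵥ X = ∑ i, X i * eulerInv (0 + 1) (pderiv i p) := by
        simp only [dotProduct, mul_comm, zero_add]
    _ = eulerInv 0 (euler p) := by simp only [X_mul_eulerInv_succ, euler_apply, map_sum]
    _ = p := by rw [eulerInv_zero_euler, h0, C_0, sub_zero]

theorem exists_mulVec_X_eq {v : σ → MvPolynomial σ K}
    (hv : ∀ i, v i ∈ restrictTotalDegree σ K (m + 1)) (h : v ⬝ᵥ X = 0) :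
    ∃ τ ∈ (restrictTotalDegree σ K m).skewMatrices σ, τ *ᵥ X = v := by
  set τ : Matrix σ σ (MvPolynomial σ K) :=
    Matrix.of fun j i => eulerInv 2 (pderiv i (v j) - pderiv j (v i)) with hτ
  refine ⟨τ, ⟨fun j i => ?_, fun i j => ?_⟩, ?_⟩
  · exact eulerInv_mem_restrictTotalDegree 2 (sub_mem (pderiv_mem_restrictTotalDegree i (hv j))
      (pderiv_mem_restrictTotalDegree j (hv i)))
  · simp only [hτ, of_apply, ← map_neg, neg_sub]
  · ext1 j
    calc (τ *ᵥ X) j = ∑ i, X i * eulerInv (1 + 1) (pderiv i (v j) - pderiv j (v i)) := by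
          simp only [hτ, mulVec, dotProduct, of_apply, mul_comm]
      _ = eulerInv 1 (euler (v j) - ∑ i, X i * pderiv j (v i)) := by
          simp only [X_mul_eulerInv_succ, ← map_sum, mul_sub, Finset.sum_sub_distrib, euler_apply]
      _ = v j := by
          rw [sum_X_mul_pderiv_of_dotProduct_X_eq_zero h, sub_neg_eq_add]
          simpa only [one_smul] using eulerInv_euler_add_smul one_ne_zero (v j)

theorem map_dotProductX_pi_restrictTotalDegree (m : ℕ) :
    (Submodule.pi Set.univ fun _ : σ => restrictTotalDegree σ K (m + 1)).map dotProductX =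
      restrictTotalDegree σ K (m + 2) ⊓ LinearMap.ker (lcoeff K 0) := by
  refine le_antisymm ?_ fun p ⟨hp, h0⟩ => ?_
  · rintro _ ⟨v, hv, rfl⟩
    refine ⟨dotProduct_X_mem_restrictTotalDegree fun i => hv i trivial, ?_⟩
    simp [dotProduct, map_sum, ← constantCoeff_eq]
  · obtain ⟨v, hv, rfl⟩ := exists_dotProduct_X_eq hp (by simpa [constantCoeff_eq] using h0)
    exact ⟨v, fun i _ => hv i, rfl⟩

theorem map_mulVecX_skewMatrices (m : ℕ) :
    ((restrictTotalDegree σ K m).skewMatrices σ).map mulVecX =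
      (Submodule.pi Set.univ fun _ : σ => restrictTotalDegree σ K (m + 1)) ⊓
        LinearMap.ker dotProductX := by
  refine le_antisymm ?_ fun v ⟨hv, h⟩ => ?_
  · rintro _ ⟨τ, ⟨hτ, hskew⟩, rfl⟩
    exact ⟨fun j _ => dotProduct_X_mem_restrictTotalDegree (hτ j),
      mulVec_dotProduct_self_eq_zero hskew X⟩
  · obtain ⟨τ, hτ, rfl⟩ := exists_mulVec_X_eq (fun i => hv i trivial) h
    exact ⟨τ, hτ, rfl⟩

end Exactness

theorem finrank_skewMatrices_inf_ker_mulVecX (σ K : Type*) [Fintype σ] [LinearOrder σ]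
    [Field K] [CharZero K] (m : ℕ) :
    finrank K ↥((restrictTotalDegree σ K m).skewMatrices σ ⊓ LinearMap.ker mulVecX)
        + Fintype.card σ * (m + 1 + Fintype.card σ).choose (Fintype.card σ) + 1 =
      (Fintype.card σ).choose 2 * (m + Fintype.card σ).choose (Fintype.card σ)
        + (m + 2 + Fintype.card σ).choose (Fintype.card σ) := by
  have hskew :=
    ((restrictTotalDegree σ K m).skewMatrices σ).finrank_map_add_finrank_inf_ker mulVecX
  rw [map_mulVecX_skewMatrices, Submodule.finrank_skewMatrices,
    finrank_restrictTotalDegree] at hskew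
  have := Submodule.finiteDimensional_pi_univ_const (ι := σ) (restrictTotalDegree σ K (m + 1))
  have hvec := (Submodule.pi Set.univ fun _ : σ =>
    restrictTotalDegree σ K (m + 1)).finrank_map_add_finrank_inf_ker dotProductX
  rw [map_dotProductX_pi_restrictTotalDegree, Submodule.finrank_pi_univ_const,
    finrank_restrictTotalDegree] at hvec
  have hpoly := (restrictTotalDegree σ K (m + 2)).finrank_map_add_finrank_inf_ker (lcoeff K 0)
  rw [map_lcoeff_zero_restrictTotalDegree, finrank_top, finrank_self,
    finrank_restrictTotalDegree] at hpoly
  omega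

end MvPolynomial

theorem antisymKerX_eq (d m : ℕ) :
    antisymKerX d m =
      (restrictTotalDegree (Fin d) ℝ m).skewMatrices (Fin d) ⊓ LinearMap.ker mulVecX := by
  ext τ
  simp only [Submodule.mem_inf, Submodule.mem_skewMatrices, LinearMap.mem_ker, mulVecX_apply,
    mem_restrictTotalDegree, _root_.funext_iff, and_assoc]
  rfl

theorem finrank_antisymKerX_general (d k : ℕ) (hk : 2 ≤ k) :
    (Module.finrank ℝ (antisymKerX d (k - 2)) : ℚ)
      = (d : ℚ) * ((d : ℚ) - 1) / 2 * (Nat.choose (k - 2 + d) d : ℚ)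
        + ((Nat.choose (k + d) d : ℚ) - 1)
        - (d : ℚ) * (Nat.choose (k - 1 + d) d : ℚ) := by
  obtain ⟨m, rfl⟩ := Nat.exists_eq_add_of_le' hk
  rw [Nat.add_sub_cancel, show m + 2 - 1 = m + 1 by omega, antisymKerX_eq,
    ← Nat.cast_choose_two]
  have h := finrank_skewMatrices_inf_ker_mulVecX (Fin d) ℝ m
  rw [Fintype.card_fin] at h
  have hq := congrArg (Nat.cast (R := ℚ)) h
  push_cast at hq
  linarith

/-- `dim(P_{k-2}(T; 𝕂) ∩ ker(x))
= dim P_{k-2}(T; 𝕂) + dim ∇P_k(T) − dim P_{k-1}(T; ℝ^d)`, with the explicit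
values `dim ∇P_k(T) = C(k+d, d) − 1`, `dim P_{k-1}(T; ℝ^d) = d·C(k-1+d, d)`,
`dim P_{k-2}(T; 𝕂) = (d(d−1)/2)·C(k-2+d, d)`. -/
theorem finrank_antisymKerX (d k : ℕ) (hd : 1 ≤ d) (hk : 2 ≤ k) :
    (Module.finrank ℝ (antisymKerX d (k - 2)) : ℚ)
      = (d : ℚ) * ((d : ℚ) - 1) / 2 * (Nat.choose (k - 2 + d) d : ℚ)
        + ((Nat.choose (k + d) d : ℚ) - 1)
        - (d : ℚ) * (Nat.choose (k - 1 + d) d : ℚ) :=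
  finrank_antisymKerX_general d k hk
end

section
/- Let T be a d-simplex with faces F_0,…,F_d, outward unit normals n_0,…,n_d, and barycentric coordinates λ_0,…,λ_d. Let {N_{ij}}_{1≤i<j≤d} be the basis of the antisymmetric matrices 𝕂 dual to {skw(n_i n_jᵀ)}_{1≤i<j≤d}. Then an antisymmetric-matrix-valued polynomial τ ∈ P_k(T; 𝕂) satisfies τ n|_{F_i} = 0 for i = 1,…,d if and only if τ = Σ_{1≤i<j≤d} λ_i λ_j q_{ij} N_{ij} for some scalar polynomials q_{ij} ∈ P_{k-2}(T). -/
/-!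
Let `G` be the matrix with rows `n_i`. The duality relations say `G N_{ij} Gᵀ = E_{ij} - E_{ji}`,
so every antisymmetric `M` equals `∑_{i<j} (n_iᵀ M n_j) N_{ij}`, and `N_{ij} n_l = 0` for
`l ∉ {i, j}`; the latter gives the easy direction. Conversely, `p_{ij} = n_iᵀ τ n_j` vanishes on
`F_i` (there `τ n_i = 0`, and `τ` is antisymmetric) and on `F_j`, so it is divisible by the
non-associated primes `λ_i` and `λ_j`, hence by `λ_i λ_j`, with a quotient of degree `≤ k - 2`.
A polynomial vanishing on `{λ = 0}` is divisible by the affine `λ`: solve `λ = 0` for one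
variable and apply the factor theorem in that variable.
-/

open Matrix MvPolynomial

section SkewSymmetric

variable {ι K : Type*} [LinearOrder ι] [Field K]

def skewSingle (i j : ι) : Matrix ι ι K := single i j 1 - single j i 1

lemma transpose_skewSingle (i j : ι) : (skewSingle i j : Matrix ι ι K)ᵀ = -skewSingle i j := by
  simp [skewSingle, transpose_sub]

lemma skewSingle_apply_of_lt {i j l m : ι} (hij : i < j) (hlm : l < m) :
    (skewSingle i j : Matrix ι ι K) l m = if i = l ∧ j = m then 1 else 0 := by
  have : ¬ (j = l ∧ i = m) := by rintro ⟨rfl, rfl⟩; exact lt_asymm hij hlm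
  simp [skewSingle, single_apply, this]

lemma sum_smul_skewSingle_apply [Fintype ι] (P : Matrix ι ι K) (l m : ι) :
    (∑ i, ∑ j ∈ Finset.univ.filter (fun j => i < j), P i j • skewSingle i j) l m =
      (if l < m then P l m else 0) - if m < l then P m l else 0 := by
  simp only [Matrix.sum_apply, Matrix.smul_apply, skewSingle, Matrix.sub_apply, single_apply,
    smul_eq_mul, mul_sub, Finset.sum_sub_distrib, mul_ite, mul_one, mul_zero, ite_and]
  rw [Fintype.sum_eq_single l fun x hx => by simp [hx],
    Fintype.sum_eq_single m fun x hx => by simp [hx]]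
  simp [Finset.sum_ite_eq']

variable [NeZero (2 : K)]

omit [LinearOrder ι] in
lemma diag_eq_zero_of_transpose_eq_neg {P : Matrix ι ι K} (hP : Pᵀ = -P) (l : ι) :
    P l l = 0 := by
  have h : P l l = -P l l := congrFun (congrFun hP l) l
  rw [eq_neg_iff_add_eq_zero, ← two_mul] at h
  exact (mul_eq_zero.1 h).resolve_left two_ne_zero

lemma eq_sum_smul_skewSingle [Fintype ι] {P : Matrix ι ι K} (hP : Pᵀ = -P) :
    P = ∑ i, ∑ j ∈ Finset.univ.filter (fun j => i < j), P i j • skewSingle i j := by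
  refine Matrix.ext fun l m => ?_
  have hPml : P m l = -P l m := congrFun (congrFun hP l) m
  rw [sum_smul_skewSingle_apply]
  rcases lt_trichotomy l m with h | rfl | h
  · simp [h, not_lt_of_gt h]
  · simp [diag_eq_zero_of_transpose_eq_neg hP]
  · simp [h, not_lt_of_gt h, hPml]

lemma eq_of_transpose_eq_neg [Fintype ι] {P Q : Matrix ι ι K} (hP : Pᵀ = -P) (hQ : Qᵀ = -Q)
    (h : ∀ l m, l < m → P l m = Q l m) : P = Q := by
  rw [eq_sum_smul_skewSingle hP, eq_sum_smul_skewSingle hQ]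
  refine Finset.sum_congr rfl fun i _ => Finset.sum_congr rfl fun j hj => ?_
  rw [h i j (Finset.mem_filter.1 hj).2]

end SkewSymmetric

section DotProduct

variable {ι K : Type*} [Fintype ι] [Field K]

lemma dotProduct_mulVec_eq_sum (A : Matrix ι ι K) (u w : ι → K) :
    u ⬝ᵥ A *ᵥ w = ∑ a, ∑ b, A a b * (u a * w b) := by
  simp only [dotProduct, mulVec, Finset.mul_sum]
  exact Finset.sum_congr rfl fun a _ => Finset.sum_congr rfl fun b _ => by ring

lemma dotProduct_mulVec_of_transpose_eq_neg {A : Matrix ι ι K} (hA : Aᵀ = -A) (u w : ι → K) :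
    u ⬝ᵥ A *ᵥ w = -(w ⬝ᵥ A *ᵥ u) := by
  rw [dotProduct_mulVec, dotProduct_comm, ← mulVec_transpose, hA, neg_mulVec, dotProduct_neg]

lemma sum_mul_skw_vecMulVec [NeZero (2 : K)] {A : Matrix ι ι K} (hA : Aᵀ = -A) (u w : ι → K) :
    ∑ a, ∑ b, A a b * ((1 / 2 : K) • (vecMulVec u w - (vecMulVec u w)ᵀ)) a b =
      u ⬝ᵥ A *ᵥ w := by
  have hwu : ∑ a, ∑ b, A a b * (u b * w a) = w ⬝ᵥ A *ᵥ u := by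
    simp only [dotProduct_mulVec_eq_sum, mul_comm (u _)]
  simp only [Matrix.smul_apply, Matrix.sub_apply, transpose_apply, vecMulVec_apply, smul_eq_mul,
    mul_sub, mul_left_comm _ (1 / 2 : K), ← Finset.mul_sum, Finset.sum_sub_distrib,
    ← dotProduct_mulVec_eq_sum, hwu, dotProduct_mulVec_of_transpose_eq_neg hA u w]
  field_simp
  ring

lemma of_mul_mul_transpose_apply (n : ι → ι → K) (A : Matrix ι ι K) (l m : ι) :
    (of n * A * (of n)ᵀ) l m = n l ⬝ᵥ A *ᵥ n m := by
  rw [dotProduct_mulVec, Matrix.mul_apply]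
  simp [dotProduct, vecMul, Matrix.mul_apply]

end DotProduct

section DualBasis

variable {ι K : Type*} [Fintype ι] [LinearOrder ι] [Field K]
  {n : ι → ι → K} {N : ι → ι → Matrix ι ι K}

lemma of_mul_mul_transpose_eq_skewSingle [NeZero (2 : K)] (hN : ∀ i j, (N i j)ᵀ = -N i j)
    (hdual : ∀ i j l m, i < j → l < m →
      ∑ a, ∑ b, N i j a b * ((1 / 2 : K) • (vecMulVec (n l) (n m) - (vecMulVec (n l) (n m))ᵀ)) a b
        = if i = l ∧ j = m then 1 else 0)
    {i j : ι} (hij : i < j) : of n * N i j * (of n)ᵀ = skewSingle i j := by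
  refine eq_of_transpose_eq_neg ?_ (transpose_skewSingle i j) fun l m hlm => ?_
  · simp [Matrix.transpose_mul, hN, Matrix.mul_assoc]
  · rw [of_mul_mul_transpose_apply, ← sum_mul_skw_vecMulVec (hN i j), hdual i j l m hij hlm,
      skewSingle_apply_of_lt hij hlm]

variable (hG : IsUnit (of n)) (hGN : ∀ i j, i < j → of n * N i j * (of n)ᵀ = skewSingle i j)
include hG hGN

lemma eq_sum_dotProduct_mulVec_smul [NeZero (2 : K)] {M : Matrix ι ι K} (hM : Mᵀ = -M) :
    M = ∑ i, ∑ j ∈ Finset.univ.filter (fun j => i < j), (n i ⬝ᵥ M *ᵥ n j) • N i j := by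
  have hGMG : (of n * M * (of n)ᵀ)ᵀ = -(of n * M * (of n)ᵀ) := by
    simp [Matrix.transpose_mul, hM, Matrix.mul_assoc]
  refine hG.mul_left_cancel (((isUnit_transpose _).2 hG).mul_right_cancel ?_)
  calc of n * M * (of n)ᵀ
      = ∑ i, ∑ j ∈ Finset.univ.filter (fun j => i < j),
          (of n * M * (of n)ᵀ) i j • skewSingle i j := eq_sum_smul_skewSingle hGMG
    _ = ∑ i, ∑ j ∈ Finset.univ.filter (fun j => i < j),
          (n i ⬝ᵥ M *ᵥ n j) • (of n * N i j * (of n)ᵀ) := by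
        refine Finset.sum_congr rfl fun i _ => Finset.sum_congr rfl fun j hj => ?_
        rw [of_mul_mul_transpose_apply, hGN i j (Finset.mem_filter.1 hj).2]
    _ = _ := by
        simp only [Finset.mul_sum, Finset.sum_mul, Matrix.mul_smul, Matrix.smul_mul]

lemma mulVec_eq_zero_of_ne {i j l : ι} (hij : i < j) (hli : l ≠ i) (hlj : l ≠ j) :
    N i j *ᵥ n l = 0 := by
  have hnl : n l = (of n)ᵀ *ᵥ Pi.single l 1 := by
    rw [mulVec_single_one]; rfl
  apply mulVec_injective_of_isUnit hG
  rw [mulVec_zero, hnl, mulVec_mulVec, mulVec_mulVec, hGN i j hij]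
  ext a
  simp [skewSingle, hli.symm, hlj.symm]

lemma sum_smul_mulVec_eq_zero {f : ι → ι → K} {l : ι} (hf : ∀ j, f l j = 0 ∧ f j l = 0) :
    (∑ i, ∑ j ∈ Finset.univ.filter (fun j => i < j), f i j • N i j) *ᵥ n l = 0 := by
  simp only [Matrix.sum_mulVec, Matrix.smul_mulVec]
  refine Finset.sum_eq_zero fun i _ => Finset.sum_eq_zero fun j hj => ?_
  have hij := (Finset.mem_filter.1 hj).2
  by_cases hli : l = i
  · simp [← hli, (hf j).1]
  by_cases hlj : l = j
  · simp [← hlj, (hf i).2]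
  rw [mulVec_eq_zero_of_ne hG hGN hij hli hlj, smul_zero]

end DualBasis

section Vanishing

variable {R S : Type*} [CommRing R]

lemma optionEquivLeft_rename_some (r : MvPolynomial S R) :
    optionEquivLeft R S (rename some r) = Polynomial.C r := by
  induction r using MvPolynomial.induction_on with
  | C a => simp [optionEquivLeft_C]
  | add p q hp hq => simp [hp, hq]
  | mul_X p s hp => simp [hp, optionEquivLeft_X_some]

lemma X_none_sub_rename_some_dvd [IsDomain R] [Infinite R] {r : MvPolynomial S R}
    {p : MvPolynomial (Option S) R}
    (hp : ∀ y : S → R, eval (fun o => o.elim (eval y r) y) p = 0) :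
    X none - rename some r ∣ p := by
  have hroot : (optionEquivLeft R S p).IsRoot r := MvPolynomial.funext fun y => by
    rw [map_zero, ← Polynomial.eval₂_hom, ← Polynomial.eval_map, ← optionEquivLeft_elim_eval, hp]
  rw [← map_dvd_iff (optionEquivLeft R S), map_sub, optionEquivLeft_X_none,
    optionEquivLeft_rename_some]
  exact Polynomial.dvd_iff_isRoot.2 hroot

end Vanishing

section Affine

variable {K σ : Type*} [Field K]

lemma prime_of_totalDegree_eq_one {p : MvPolynomial σ K} (hp : p.totalDegree = 1) : Prime p := by
  refine (irreducible_of_totalDegree_eq_one hp fun x hx => isUnit_iff_ne_zero.2 ?_).prime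
  rintro rfl
  have : p = 0 := MvPolynomial.ext _ _ fun m => by simpa using hx m
  simp [this] at hp

lemma exists_eq_mul_C_of_dvd {l m : MvPolynomial σ K} (h : l ∣ m) (hm : m ≠ 0)
    (hlm : l.totalDegree = m.totalDegree) : ∃ r : K, m = l * C r := by
  obtain ⟨u, rfl⟩ := h
  rw [totalDegree_mul_of_isDomain (left_ne_zero_of_mul hm) (right_ne_zero_of_mul hm),
    left_eq_add, totalDegree_eq_zero_iff_eq_C] at hlm
  exact ⟨_, by rw [← hlm]⟩

lemma exists_eq_mul_totalDegree_le {f p : MvPolynomial σ K} {k : ℕ} (h : f ∣ p)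
    (hp : p.totalDegree ≤ k) : ∃ q, p = f * q ∧ q.totalDegree ≤ k - f.totalDegree := by
  obtain ⟨q, rfl⟩ := h
  rcases eq_or_ne (f * q) 0 with h0 | h0
  · exact ⟨0, by rw [h0, mul_zero], by simp⟩
  · rw [totalDegree_mul_of_isDomain (left_ne_zero_of_mul h0) (right_ne_zero_of_mul h0)] at hp
    exact ⟨q, rfl, by omega⟩

variable [Fintype σ]

lemma dvd_of_eval_eq_zero_imp [Infinite K] {l p : MvPolynomial σ K} {c : K} {v : σ → K}
    (hv : v ≠ 0) (hl : ∀ x, eval x l = c + v ⬝ᵥ x) (hp : ∀ x, eval x l = 0 → eval x p = 0) :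
    l ∣ p := by
  classical
  obtain ⟨e, he⟩ : ∃ e, v e ≠ 0 := Function.ne_iff.1 hv
  set ρ := Equiv.optionSubtypeNe e
  set r : MvPolynomial {b // b ≠ e} K := C (-(v e)⁻¹) * (C c + ∑ b : {b // b ≠ e}, C (v b) * X b)
  have hl' : rename ρ.symm l = C (v e) * (X none - rename some r) :=
    MvPolynomial.funext fun y => by
      have hdot : v ⬝ᵥ (y ∘ ρ.symm) = v e * y none + ∑ b : {b // b ≠ e}, v b * y (some b) := by
        rw [dotProduct, ← ρ.sum_comp, Fintype.sum_option]
        simp only [Function.comp_apply, Equiv.symm_apply_apply]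
        rfl
      simp only [eval_rename, hl, hdot, r, map_mul, map_sub, map_add, map_sum, eval_C, eval_X,
        Function.comp_apply]
      field_simp
      ring
  have hdvd : X none - rename some r ∣ rename ρ.symm p := X_none_sub_rename_some_dvd fun y => by
    rw [eval_rename]
    refine hp _ ?_
    rw [← eval_rename, hl']
    simp [eval_rename, Function.comp_def]
  rw [← map_dvd_iff (renameEquiv K ρ.symm)]
  simpa [hl', ((isUnit_iff_ne_zero.2 he).map C).mul_left_dvd] using hdvd

lemma not_dvd_of_linearIndependent {ι : Type*} {v : ι → σ → K} (hv : LinearIndependent K v)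
    {i j : ι} (hij : i ≠ j) {l m : MvPolynomial σ K} (hl : l.totalDegree = 1)
    (hm : m.totalDegree = 1) {c c' : K} (hlv : ∀ x, eval x l = c + v i ⬝ᵥ x)
    (hmw : ∀ x, eval x m = c' + v j ⬝ᵥ x) : ¬ l ∣ m := by
  classical
  intro h
  obtain ⟨r, hr⟩ := exists_eq_mul_C_of_dvd h (by rintro rfl; simp at hm) (hl.trans hm.symm)
  have heval : ∀ x, c' + v j ⬝ᵥ x = (c + v i ⬝ᵥ x) * r := fun x => by
    rw [← hlv, ← hmw, hr, map_mul, eval_C]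
  have hsmul : (1 : K) • v j = r • v i := funext fun b => by
    have h0 := heval 0
    have h1 := heval (Pi.single b 1)
    simp only [dotProduct_zero, dotProduct_single, mul_one, add_zero] at h0 h1
    simp only [Pi.smul_apply, smul_eq_mul, one_mul]
    linear_combination h1 - h0
  have hpair : LinearIndependent K ![v j, v i] := by
    convert hv.comp ![j, i] fun a b h => by fin_cases a <;> fin_cases b <;> simp_all [hij.symm]
    ext k; fin_cases k <;> rfl
  exact one_ne_zero (hpair.eq_zero_of_pair' hsmul).1

lemma mul_dvd_of_eval_eq_zero [Infinite K] {ι : Type*} {v : ι → σ → K}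
    (hv : LinearIndependent K v) {c : ι → K} {lam : ι → MvPolynomial σ K}
    (hdeg : ∀ i, (lam i).totalDegree = 1) (hlam : ∀ i x, eval x (lam i) = c i + v i ⬝ᵥ x)
    {i j : ι} (hij : i ≠ j) {p : MvPolynomial σ K}
    (hpi : ∀ x, eval x (lam i) = 0 → eval x p = 0) (hpj : ∀ x, eval x (lam j) = 0 → eval x p = 0) :
    lam i * lam j ∣ p := by
  obtain ⟨s, rfl⟩ := dvd_of_eval_eq_zero_imp (hv.ne_zero i) (hlam i) hpi
  have hjs : lam j ∣ lam i * s := dvd_of_eval_eq_zero_imp (hv.ne_zero j) (hlam j) hpj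
  obtain ⟨t, rfl⟩ := ((prime_of_totalDegree_eq_one (hdeg j)).dvd_or_dvd hjs).resolve_left
    (not_dvd_of_linearIndependent hv hij.symm (hdeg j) (hdeg i) (hlam j) (hlam i))
  exact ⟨t, (mul_assoc _ _ _).symm⟩

end Affine

section Bubble

variable {ι σ K : Type*} [Fintype ι] [Field K] {τ : Matrix ι ι (MvPolynomial σ K)}

/-- The paper's `p_{ij}` is `bilinPoly τ (n i) (n j)`. -/
noncomputable def bilinPoly (τ : Matrix ι ι (MvPolynomial σ K)) (u w : ι → K) : MvPolynomial σ K :=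
  ∑ a, ∑ b, (u a * w b) • τ a b

lemma eval_bilinPoly (u w : ι → K) (x : σ → K) :
    eval x (bilinPoly τ u w) = u ⬝ᵥ τ.map (eval x) *ᵥ w := by
  simp only [bilinPoly, map_sum, smul_eval, dotProduct_mulVec_eq_sum, map_apply, mul_comm]

lemma totalDegree_bilinPoly_le {k : ℕ} (hτ : ∀ a b, (τ a b).totalDegree ≤ k) (u w : ι → K) :
    (bilinPoly τ u w).totalDegree ≤ k :=
  (totalDegree_finsetSum _ _).trans <| Finset.sup_le fun a _ =>
    (totalDegree_finsetSum _ _).trans <| Finset.sup_le fun b _ =>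
      (totalDegree_smul_le _ _).trans (hτ a b)

omit [Fintype ι] in
lemma transpose_map_eval (hτ : ∀ a b, τ b a = -τ a b) (x : σ → K) :
    (τ.map (eval x))ᵀ = -τ.map (eval x) := by
  ext a b
  simp only [transpose_apply, map_apply, Matrix.neg_apply, hτ a b, map_neg]

variable [LinearOrder ι]

lemma apply_eq_sum_bilinPoly_mul_C [Infinite K] [NeZero (2 : K)] {n : ι → ι → K} {N : ι → ι → Matrix ι ι K}
    (hG : IsUnit (of n)) (hGN : ∀ i j, i < j → of n * N i j * (of n)ᵀ = skewSingle i j)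
    (hτ : ∀ a b, τ b a = -τ a b) (a b : ι) :
    τ a b = ∑ i, ∑ j ∈ Finset.univ.filter (fun j => i < j),
      bilinPoly τ (n i) (n j) * C (N i j a b) := MvPolynomial.funext fun x => by
  have := congrFun (congrFun (eq_sum_dotProduct_mulVec_smul hG hGN (transpose_map_eval hτ x)) a) b
  simp only [map_apply, Matrix.sum_apply, Matrix.smul_apply, smul_eq_mul] at this
  simp only [this, map_sum, map_mul, eval_C, eval_bilinPoly]

lemma exists_bilinPoly_eq_mul_mul [Infinite K] [Fintype σ] {n : ι → ι → K} {v : ι → σ → K}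
    (hv : LinearIndependent K v) {c : ι → K} {lam : ι → MvPolynomial σ K}
    (hdeg : ∀ i, (lam i).totalDegree = 1) (hlam : ∀ i x, eval x (lam i) = c i + v i ⬝ᵥ x)
    (hτ : ∀ a b, τ b a = -τ a b) {k : ℕ} (hτdeg : ∀ a b, (τ a b).totalDegree ≤ k)
    (H : ∀ i x, eval x (lam i) = 0 → τ.map (eval x) *ᵥ n i = 0) (i j : ι) :
    ∃ q : MvPolynomial σ K, q.totalDegree ≤ k - 2 ∧
      (i < j → bilinPoly τ (n i) (n j) = lam i * lam j * q) := by
  by_cases hij : i < j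
  swap
  · exact ⟨0, by simp, fun h => absurd h hij⟩
  have hvan_i : ∀ x, eval x (lam i) = 0 → eval x (bilinPoly τ (n i) (n j)) = 0 := fun x hx => by
    rw [eval_bilinPoly, dotProduct_mulVec_of_transpose_eq_neg (transpose_map_eval hτ x), H i x hx,
      dotProduct_zero, neg_zero]
  have hvan_j : ∀ x, eval x (lam j) = 0 → eval x (bilinPoly τ (n i) (n j)) = 0 := fun x hx => by
    rw [eval_bilinPoly, H j x hx, dotProduct_zero]
  have hne : ∀ i, lam i ≠ 0 := fun i h => by simpa [h] using hdeg i
  obtain ⟨q, hpq, hq⟩ := exists_eq_mul_totalDegree_le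
    (mul_dvd_of_eval_eq_zero hv hdeg hlam hij.ne hvan_i hvan_j) (totalDegree_bilinPoly_le hτdeg _ _)
  rw [totalDegree_mul_of_isDomain (hne i) (hne j), hdeg, hdeg] at hq
  exact ⟨q, hq, fun _ => hpq⟩

end Bubble

theorem bubble_characterization_antisym_general (d k : ℕ)
    (n : Fin d → Fin d → ℝ) (hn : LinearIndependent ℝ n)
    (lam : Fin d → MvPolynomial (Fin d) ℝ)
    (hlamdeg : ∀ i, (lam i).totalDegree = 1)
    (hlamgrad : ∀ i, ∃ c a : ℝ, a ≠ 0 ∧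
      ∀ x : Fin d → ℝ, eval x (lam i) = c + a * (n i ⬝ᵥ x))
    (N : Fin d → Fin d → Matrix (Fin d) (Fin d) ℝ)
    (hNskw : ∀ i j, (N i j)ᵀ = - N i j)
    (hNdual : ∀ i j l m : Fin d, i < j → l < m →
      ∑ a : Fin d, ∑ b : Fin d, N i j a b *
          ((1/2 : ℝ) • (vecMulVec (n l) (n m) - (vecMulVec (n l) (n m))ᵀ)) a b
        = if i = l ∧ j = m then 1 else 0)
    (τ : Matrix (Fin d) (Fin d) (MvPolynomial (Fin d) ℝ))
    (hτdeg : ∀ a b, (τ a b).totalDegree ≤ k)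
    (hτskw : ∀ a b, τ b a = - τ a b) :
    (∀ i : Fin d, ∀ x : Fin d → ℝ, eval x (lam i) = 0 →
        ∀ a, ∑ b, eval x (τ a b) * n i b = 0) ↔
    (∃ q : Fin d → Fin d → MvPolynomial (Fin d) ℝ,
      (∀ i j, (q i j).totalDegree ≤ k - 2) ∧
      ∀ a b, τ a b = ∑ i : Fin d, ∑ j ∈ Finset.univ.filter (fun j => i < j),
        lam i * lam j * q i j * C (N i j a b)) := by
  choose c s hs hlam using hlamgrad
  have hv : LinearIndependent ℝ (fun i => s i • n i) := hn.units_smul fun i => Units.mk0 (s i) (hs i)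
  have hlam' : ∀ i x, eval x (lam i) = c i + (s i • n i) ⬝ᵥ x := fun i x => by
    rw [hlam, smul_dotProduct, smul_eq_mul]
  have hG : IsUnit (of n) := linearIndependent_rows_iff_isUnit.1 hn
  have hGN : ∀ i j, i < j → of n * N i j * (of n)ᵀ = skewSingle i j :=
    fun i j => of_mul_mul_transpose_eq_skewSingle hNskw hNdual
  constructor
  · intro H
    choose q hqdeg hq using exists_bilinPoly_eq_mul_mul hv hlamdeg hlam' hτskw hτdeg
      fun i x hx => funext (H i x hx)
    refine ⟨q, hqdeg, fun a b => ?_⟩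
    rw [apply_eq_sum_bilinPoly_mul_C hG hGN hτskw a b]
    exact Finset.sum_congr rfl fun i _ => Finset.sum_congr rfl fun j hj => by
      rw [hq i j (Finset.mem_filter.1 hj).2]
  · rintro ⟨q, -, hτ⟩ i x hx
    have hτx : τ.map (eval x) = ∑ l, ∑ m ∈ Finset.univ.filter (fun m => l < m),
        eval x (lam l * lam m * q l m) • N l m := by
      ext a b
      simp [hτ a b, map_sum, Matrix.sum_apply]
    intro a
    have := congrFun (sum_smul_mulVec_eq_zero hG hGN
      (l := i) (f := fun l m => eval x (lam l * lam m * q l m)) fun j => by simp [hx]) a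
    rwa [← hτx] at this

/-- Bubble characterization. Let `n_1, …, n_d` be the outward unit
normals to the faces `F_1, …, F_d` of a `d`-simplex (each face lying in the
hyperplane `{λ_i = 0}` where `λ_i` is the corresponding barycentric coordinate,
an affine polynomial whose gradient is parallel to `n_i`), and let
`{N_{ij}}_{i<j}` be the basis of the antisymmetric matrices dual to
`{skw(n_i n_jᵀ)}_{i<j}` under the Frobenius pairing. Then an
antisymmetric-matrix-valued polynomial `τ ∈ P_k(T; 𝕂)` satisfies
`τ n_i = 0` on `F_i` for `i = 1, …, d` if and only if
`τ = Σ_{i<j} λ_i λ_j q_{ij} N_{ij}` for some `q_{ij} ∈ P_{k-2}(T)`. -/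
theorem bubble_characterization_antisym (d k : ℕ) (hd : 1 ≤ d)
    (n : Fin d → Fin d → ℝ) (hn : LinearIndependent ℝ n)
    (lam : Fin d → MvPolynomial (Fin d) ℝ)
    (hlamdeg : ∀ i, (lam i).totalDegree = 1)
    (hlamgrad : ∀ i, ∃ c a : ℝ, a ≠ 0 ∧
      ∀ x : Fin d → ℝ, eval x (lam i) = c + a * (n i ⬝ᵥ x))
    (N : Fin d → Fin d → Matrix (Fin d) (Fin d) ℝ)
    (hNskw : ∀ i j, (N i j)ᵀ = - N i j)
    (hNdual : ∀ i j l m : Fin d, i < j → l < m →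
      ∑ a : Fin d, ∑ b : Fin d, N i j a b *
          ((1/2 : ℝ) • (vecMulVec (n l) (n m) - (vecMulVec (n l) (n m))ᵀ)) a b
        = if i = l ∧ j = m then 1 else 0)
    (τ : Matrix (Fin d) (Fin d) (MvPolynomial (Fin d) ℝ))
    (hτdeg : ∀ a b, (τ a b).totalDegree ≤ k)
    (hτskw : ∀ a b, τ b a = - τ a b) :
    (∀ i : Fin d, ∀ x : Fin d → ℝ, eval x (lam i) = 0 →
        ∀ a, ∑ b, eval x (τ a b) * n i b = 0) ↔
    (∃ q : Fin d → Fin d → MvPolynomial (Fin d) ℝ,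
      (∀ i j, (q i j).totalDegree ≤ k - 2) ∧
      ∀ a b, τ a b = ∑ i : Fin d, ∑ j ∈ Finset.univ.filter (fun j => i < j),
        lam i * lam j * q i j * C (N i j a b)) :=
  bubble_characterization_antisym_general d k n hn lam hlamdeg hlamgrad N hNskw hNdual τ hτdeg hτskw
end

section
/- The number of degrees of freedom in the list (1) edge moments of (n₁ᵉ)ᵀτn₂ᵉ against P_k(e) over all (d−2)-faces, (2) face moments of div_F(τn) against P_{k-1}(F)/ℝ and (3) face moments of τn against P_{k-2}(F;𝕂)x over all (d−1)-faces, (4) interior moments of div τ against P_{k-3}(T;𝕂)x, and (5) interior moments of τ against P_{k-2}(T;𝕂)∩ker(x), sums to (d²−d)/2 · C(k+d, d), which equals dim P_k(T; 𝕂). -/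
/-- The total number of degrees of freedom
(edge moments against `P_k(e)` over the `C(d+1,2)` faces of dimension `d−2`;
face moments against `P_{k-1}(F)/ℝ` and `P_{k-2}(F;𝕂)x` over the `d+1` faces
of dimension `d−1`; interior moments against `P_{k-3}(T;𝕂)x` and
`P_{k-2}(T;𝕂) ∩ ker(x)`) sums to `(d²−d)/2 · C(k+d, d) = dim P_k(T; 𝕂)`:
`½(d²+d)C(k+d−2,k) + (d²+d)C(k+d−2,k−1) − (d+1)C(k+d−1,k)
 + ½(d²+d)C(k+d−2,k−2) + C(k+d,k) − (d+1)C(k+d−1,k−1) = ½(d²−d)C(k+d,k)`. -/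
theorem dof_count_eq_dim_Pk_K (d k : ℕ) (hd : 1 ≤ d) (hk : 2 ≤ k) :
    ((d : ℚ)^2 + d) / 2 * (Nat.choose (k + d - 2) k : ℚ)
      + ((d : ℚ)^2 + d) * (Nat.choose (k + d - 2) (k - 1) : ℚ)
      - ((d : ℚ) + 1) * (Nat.choose (k + d - 1) k : ℚ)
      + ((d : ℚ)^2 + d) / 2 * (Nat.choose (k + d - 2) (k - 2) : ℚ)
      + (Nat.choose (k + d) k : ℚ)
      - ((d : ℚ) + 1) * (Nat.choose (k + d - 1) (k - 1) : ℚ)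
    = ((d : ℚ)^2 - d) / 2 * (Nat.choose (k + d) d : ℚ) := by
  obtain ⟨e, rfl⟩ : ∃ e, d = e + 1 := ⟨d - 1, (Nat.succ_pred_eq_of_pos hd).symm⟩
  obtain ⟨m, rfl⟩ : ∃ m, k = m + 2 := ⟨k - 2, (Nat.sub_add_cancel hk).symm⟩
  have h0 : m + 2 + (e + 1) - 2 = m + e + 1 := by omega
  have h1 : m + 2 + (e + 1) - 1 = m + e + 2 := by omega
  have h2 : m + 2 + (e + 1) = m + e + 3 := by omega
  have h3 : m + 2 - 1 = m + 1 := by omega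
  have h4 : m + 2 - 2 = m := by omega
  rw [h0, h1, h2, h3, h4]
  have hsym : Nat.choose (m + e + 3) (e + 1) = Nat.choose (m + e + 3) (m + 2) := by
    rw [← Nat.choose_symm (by omega : e + 1 ≤ m + e + 3)]
    congr 1
    omega
  have p1 : Nat.choose (m + e + 2) (m + 2)
      = Nat.choose (m + e + 1) (m + 1) + Nat.choose (m + e + 1) (m + 2) :=
    Nat.choose_succ_succ (m + e + 1) (m + 1)
  have p2 : Nat.choose (m + e + 2) (m + 1)
      = Nat.choose (m + e + 1) m + Nat.choose (m + e + 1) (m + 1) :=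
    Nat.choose_succ_succ (m + e + 1) m
  have p3 : Nat.choose (m + e + 3) (m + 2)
      = Nat.choose (m + e + 2) (m + 1) + Nat.choose (m + e + 2) (m + 2) :=
    Nat.choose_succ_succ (m + e + 2) (m + 1)
  rw [hsym, p3, p1, p2]
  push_cast
  ring
end

section
/- Let V_{k-1}^{div}(K) be the divergence-constrained BDM space on a simplicial partition of a polytope K (piecewise P_{k-1} vector fields with H(div)-continuity and div lying in the global polynomial space P_{k-2}(K)), k ≥ 2. Then V_{k-1}^{div}(K) = div skw V_k^{d-2}(K) ⊕ (x − x_K)P_{k-2}(K), where V_k^{d-2}(K) is the H Λ^{d-2}-conforming macro element space; consequently div : V_{k-1}^{div}(K) → P_{k-2}(K) is surjective with kernel div skw V_k^{d-2}(K). -/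
/-- Decomposition of the divergence-constrained BDM space.
Abstract setting granted by the context: `X` is the space of vector fields on
`K`, `Y` the space of scalar functions, `D : X →ₗ Y` the divergence,
`B = V_{k-1}^{BDM}(K)`, `C = div skw V_k^{d-2}(K)`, `M = (x − x_K)P_{k-2}(K)`,
`Pdeg = P_{k-2}(K)`. The exact de Rham complex gives `C ≤ B` and
`B ∩ ker D = C`; `M ⊆ P_{k-1}(K;ℝ^d) ⊆ B`; and `D : M → Pdeg` is bijective.
Then `V_{k-1}^{div}(K) := {φ ∈ B : Dφ ∈ Pdeg} = C ⊕ M` (internal direct sum),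
and `D : V_{k-1}^{div}(K) → Pdeg` is surjective with kernel `C`. -/
theorem Vdiv_decomposition {X Y : Type*}
    [AddCommGroup X] [Module ℝ X] [AddCommGroup Y] [Module ℝ Y]
    (D : X →ₗ[ℝ] Y) (B C M : Submodule ℝ X) (Pdeg : Submodule ℝ Y)
    (hCB : C ≤ B) (hMB : M ≤ B)
    (hker : ∀ φ ∈ B, (D φ = 0 ↔ φ ∈ C))
    (hDM : ∀ m ∈ M, D m ∈ Pdeg)
    (hbij : ∀ y ∈ Pdeg, ∃! m, m ∈ M ∧ D m = y) :
    B ⊓ Submodule.comap D Pdeg = C ⊔ M ∧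
    C ⊓ M = ⊥ ∧
    Submodule.map D (B ⊓ Submodule.comap D Pdeg) = Pdeg ∧
    (B ⊓ Submodule.comap D Pdeg) ⊓ LinearMap.ker D = C := by

  have hCzero : ∀ c ∈ C, D c = 0 := fun c hc => (hker c (hCB hc)).mpr hc
  have hCV : C ≤ B ⊓ Submodule.comap D Pdeg := fun c hc =>
    ⟨hCB hc, by simp [Submodule.mem_comap, hCzero c hc]⟩
  have hMV : M ≤ B ⊓ Submodule.comap D Pdeg := fun m hm =>
    ⟨hMB hm, hDM m hm⟩
  refine ⟨le_antisymm ?_ (sup_le hCV hMV), ?_, ?_, ?_⟩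
  · rintro φ ⟨hφB, hφP⟩
    obtain ⟨m, ⟨hmM, hmD⟩, -⟩ := hbij (D φ) hφP
    have hφm : φ - m ∈ C := (hker _ (B.sub_mem hφB (hMB hmM))).mp (by simp [hmD])
    have : φ = (φ - m) + m := by abel
    rw [this]
    exact Submodule.add_mem _ (Submodule.mem_sup_left hφm) (Submodule.mem_sup_right hmM)
  · refine (Submodule.eq_bot_iff _).mpr ?_
    rintro x ⟨hxC, hxM⟩
    obtain ⟨m, -, huniq⟩ := hbij 0 Pdeg.zero_mem
    have h1 : x = m := huniq x ⟨hxM, hCzero x hxC⟩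
    have h2 : (0 : X) = m := huniq 0 ⟨M.zero_mem, by simp⟩
    rw [h1, ← h2]
  · refine le_antisymm ?_ ?_
    · rintro y ⟨φ, ⟨-, hφP⟩, rfl⟩
      exact hφP
    · intro y hy
      obtain ⟨m, ⟨hmM, hmD⟩, -⟩ := hbij y hy
      exact ⟨m, hMV hmM, hmD⟩
  · refine le_antisymm ?_ ?_
    · rintro φ ⟨⟨hφB, -⟩, hφk⟩
      exact (hker φ hφB).mp hφk
    · intro c hc
      exact ⟨hCV hc, hCzero c hc⟩
end
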